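/- Let x ≠ y be points in a proper domain D of a Banach space and γ a λ-curve in Λ^λ_{xy}(D) with λ ∈ (0, 1/4]. Then for any distinct z₁, z₂ ∈ γ, the subarc γ[z₁, z₂] is a 2λ-curve, i.e., γ[z₁,z₂] ∈ Λ^{2λ}_{z₁z₂}(D). -/

import Mathlib

open Set ENNReal

variable {E : Type*} [NormedAddCommGroup E]

/-- Distance to the boundary (= distance to the complement, for open sets). -/
noncomputable def dD (D : Set E) (z : E) : ℝ := Metric.infDist z Dᶜ

/-- A continuous curve with image in `D`, parametrized on `[a,b]`. -/
structure CurveIn (D : Set E) (a b : ℝ) (γ : ℝ → E) : Prop where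
  le : a ≤ b
  cont : ContinuousOn γ (Set.Icc a b)
  mem : ∀ t ∈ Set.Icc a b, γ t ∈ D

/-- Arc length of `γ` on `[s,t]` (as a real number; finite iff rectifiable). -/
noncomputable def len (γ : ℝ → E) (s t : ℝ) : ℝ :=
  (eVariationOn γ (Set.Icc s t)).toReal

/-- Quasihyperbolic length of `γ` over a parameter set, defined as the supremum of
weighted Riemann sums `Σ |γ(t_{i+1}) - γ(t_i)| / d_D(γ(t_i))` over monotone sequences. -/
noncomputable def qhVar (D : Set E) (γ : ℝ → E) (s : Set ℝ) : ℝ≥0∞ :=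
  ⨆ p : ℕ × { u : ℕ → ℝ // Monotone u ∧ ∀ i, u i ∈ s },
    ∑ i ∈ Finset.range p.1,
      ENNReal.ofReal (dist (γ (p.2.1 (i + 1))) (γ (p.2.1 i)) / dD D (γ (p.2.1 i)))

/-- Quasihyperbolic distance: infimum of quasihyperbolic lengths of curves in `D`
joining `x` and `y`. -/
noncomputable def qhDist (D : Set E) (x y : E) : ℝ :=
  (⨅ q : { q : ℝ × ℝ × (ℝ → E) //
      CurveIn D q.1 q.2.1 q.2.2 ∧ q.2.2 q.1 = x ∧ q.2.2 q.2.1 = y },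
    qhVar D q.1.2.2 (Set.Icc q.1.1 q.1.2.1)).toReal

/-- Inner (intrinsic) distance in `D`: infimum of arc lengths of curves in `D`
joining `x` and `y`. -/
noncomputable def innerDist (D : Set E) (x y : E) : ℝ :=
  (⨅ q : { q : ℝ × ℝ × (ℝ → E) //
      CurveIn D q.1 q.2.1 q.2.2 ∧ q.2.2 q.1 = x ∧ q.2.2 q.2.1 = y },
    eVariationOn q.1.2.2 (Set.Icc q.1.1 q.1.2.1)).toReal

/-- A proper domain: open, connected, and not the whole space. -/
def IsProperDomain (D : Set E) : Prop := IsOpen D ∧ IsConnected D ∧ D ≠ Set.univ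

/-- `(D, k_D)` is δ-Gromov hyperbolic (Gromov product formulation). -/
def GromovHyp (D : Set E) (δ : ℝ) : Prop :=
  ∀ x ∈ D, ∀ y ∈ D, ∀ z ∈ D, ∀ p ∈ D,
    (qhDist D p x + qhDist D p z - qhDist D x z) / 2 ≥
      min ((qhDist D p x + qhDist D p y - qhDist D x y) / 2)
          ((qhDist D p y + qhDist D p z - qhDist D y z) / 2) - δ

/-- A `c`-quasigeodesic in `D`: `ℓ_k(γ[s,t]) ≤ c·k_D(γ s, γ t)` for all parameters. -/
def IsQuasigeodesic (D : Set E) (c : ℝ) (a b : ℝ) (γ : ℝ → E) : Prop :=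
  CurveIn D a b γ ∧
    ∀ s t, a ≤ s → s ≤ t → t ≤ b →
      qhVar D γ (Set.Icc s t) ≤ ENNReal.ofReal (c * qhDist D (γ s) (γ t))

/-- An `h`-short arc in `D`: `ℓ_k(γ[s,t]) ≤ k_D(γ s, γ t) + h` for all parameters. -/
def ShortArc (D : Set E) (h : ℝ) (a b : ℝ) (γ : ℝ → E) : Prop :=
  CurveIn D a b γ ∧
    ∀ s t, a ≤ s → s ≤ t → t ≤ b →
      qhVar D γ (Set.Icc s t) ≤ ENNReal.ofReal (qhDist D (γ s) (γ t) + h)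

/-- The coefficient `c^λ_{x,y} = min{1 + λ/(2 k_D(x,y)), 9/8}`. -/
noncomputable def lamCoef (D : Set E) (lam : ℝ) (x y : E) : ℝ :=
  min (1 + lam / (2 * qhDist D x y)) (9 / 8)

/-- A λ-curve: a `c^λ_{x,y}`-quasigeodesic with endpoints `x = γ a`, `y = γ b`. -/
def IsLambdaCurve (D : Set E) (lam : ℝ) (a b : ℝ) (γ : ℝ → E) : Prop :=
  CurveIn D a b γ ∧
    ∀ s t, a ≤ s → s ≤ t → t ≤ b →
      qhVar D γ (Set.Icc s t) ≤
        ENNReal.ofReal (lamCoef D lam (γ a) (γ b) * qhDist D (γ s) (γ t))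

/-- A `c`-cone arc (John curve): double cone condition with constant `c`. -/
def ConeArc (D : Set E) (c : ℝ) (a b : ℝ) (γ : ℝ → E) : Prop :=
  ∀ t ∈ Set.Icc a b, min (len γ a t) (len γ t b) ≤ c * dD D (γ t)

/-- A `c`-John domain. -/
def IsJohnDomain (D : Set E) (c : ℝ) : Prop :=
  ∀ x ∈ D, ∀ y ∈ D, ∃ a b γ, CurveIn D a b γ ∧
    eVariationOn γ (Set.Icc a b) ≠ ⊤ ∧ γ a = x ∧ γ b = y ∧ ConeArc D c a b γ

/-- A `c`-uniform arc: cone condition plus `ℓ(γ) ≤ c·|γ a − γ b|`. -/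
def IsUniformArc (D : Set E) (c : ℝ) (a b : ℝ) (γ : ℝ → E) : Prop :=
  CurveIn D a b γ ∧ ConeArc D c a b γ ∧ len γ a b ≤ c * ‖γ a - γ b‖

/-- A `c`-inner uniform arc: cone condition plus the Gehring–Hayman inequality
`ℓ(γ) ≤ c·σ_D(γ a, γ b)`. -/
def IsInnerUniformArc (D : Set E) (c : ℝ) (a b : ℝ) (γ : ℝ → E) : Prop :=
  CurveIn D a b γ ∧ ConeArc D c a b γ ∧ len γ a b ≤ c * innerDist D (γ a) (γ b)

/-- A `c`-inner uniform domain. -/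
def IsInnerUniform (D : Set E) (c : ℝ) : Prop :=
  ∀ x ∈ D, ∀ y ∈ D, ∃ a b γ, γ a = x ∧ γ b = y ∧ IsInnerUniformArc D c a b γ

/-!
For `s ≤ t` in `[a,b]`, `k_D(γ s, γ t) ≤ ℓ_k(γ[s,t]) ≤ ℓ_k(γ) ≤ c^λ_{γ a,γ b} k_D(γ a, γ b)`
and `c^λ ≤ 9/8 < 2`, so `k_D(γ s, γ t) ≤ 2 k_D(γ a, γ b)`. This is exactly
`λ/(2k_D(γ a, γ b)) ≤ 2λ/(2k_D(γ s, γ t))`, i.e. `c^λ_{γ a,γ b} ≤ c^{2λ}_{γ s,γ t}`, so the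
λ-curve inequalities of `γ` on `[s,t]` are already 2λ-curve inequalities for the subarc.
-/

section

variable {D : Set E}

lemma CurveIn.mono {a b s t : ℝ} {γ : ℝ → E} (hγ : CurveIn D a b γ)
    (hs : a ≤ s) (hst : s ≤ t) (ht : t ≤ b) : CurveIn D s t γ :=
  have hsub : Icc s t ⊆ Icc a b := Icc_subset_Icc hs ht
  ⟨hst, hγ.cont.mono hsub, fun u hu => hγ.mem u (hsub hu)⟩

lemma qhVar_mono (γ : ℝ → E) {s t : Set ℝ} (h : s ⊆ t) : qhVar D γ s ≤ qhVar D γ t :=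
  iSup_le fun p => le_iSup_of_le ⟨p.1, p.2.1, p.2.2.1, fun i => h (p.2.2.2 i)⟩ le_rfl

lemma qhDist_nonneg (x y : E) : 0 ≤ qhDist D x y := toReal_nonneg

lemma qhDist_le_toReal_qhVar {s t : ℝ} {γ : ℝ → E} (hγ : CurveIn D s t γ)
    (hfin : qhVar D γ (Icc s t) ≠ ⊤) : qhDist D (γ s) (γ t) ≤ (qhVar D γ (Icc s t)).toReal :=
  toReal_mono hfin <| iInf_le_of_le ⟨(s, t, γ), hγ, rfl, rfl⟩ le_rfl

lemma lamCoef_nonneg {lam : ℝ} (hlam : 0 ≤ lam) (x y : E) : 0 ≤ lamCoef D lam x y := by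
  have : 0 ≤ lam / (2 * qhDist D x y) :=
    div_nonneg hlam (by linarith [qhDist_nonneg (D := D) x y])
  exact le_min (by linarith) (by norm_num)

lemma lamCoef_le_nine_div_eight (lam : ℝ) (x y : E) : lamCoef D lam x y ≤ 9 / 8 :=
  min_le_right _ _

lemma IsLambdaCurve.qhDist_le {lam a b s t : ℝ} {γ : ℝ → E} (hγ : IsLambdaCurve D lam a b γ)
    (hlam : 0 ≤ lam) (hs : a ≤ s) (hst : s ≤ t) (ht : t ≤ b) :
    qhDist D (γ s) (γ t) ≤ lamCoef D lam (γ a) (γ b) * qhDist D (γ a) (γ b) := by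
  have hvar : qhVar D γ (Icc s t) ≤
      ENNReal.ofReal (lamCoef D lam (γ a) (γ b) * qhDist D (γ a) (γ b)) :=
    (qhVar_mono γ (Icc_subset_Icc hs ht)).trans (hγ.2 a b le_rfl hγ.1.le le_rfl)
  calc qhDist D (γ s) (γ t) ≤ (qhVar D γ (Icc s t)).toReal :=
        qhDist_le_toReal_qhVar (hγ.1.mono hs hst ht) (ne_top_of_le_ne_top ofReal_ne_top hvar)
    _ ≤ _ := toReal_le_of_le_ofReal
        (mul_nonneg (lamCoef_nonneg hlam _ _) (qhDist_nonneg _ _)) hvar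

lemma lamCoef_le_lamCoef_two_mul {lam : ℝ} (hlam : 0 ≤ lam) {x y x' y' : E}
    (hpos : 0 < qhDist D x' y') (hle : qhDist D x' y' ≤ lamCoef D lam x y * qhDist D x y) :
    lamCoef D lam x y ≤ lamCoef D (2 * lam) x' y' := by
  set k := qhDist D x y
  set k' := qhDist D x' y'
  have hk : 0 ≤ k := qhDist_nonneg x y
  have hk' : k' ≤ 2 * k := by
    nlinarith [lamCoef_le_nine_div_eight (D := D) lam x y, lamCoef_nonneg (D := D) hlam x y]
  have hkpos : 0 < k := by linarith
  refine min_le_min ?_ le_rfl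
  have : lam / (2 * k) ≤ 2 * lam / (2 * k') := by
    rw [div_le_div_iff₀ (by positivity) (by positivity)]
    nlinarith
  linarith

end

theorem stmt8_general {E : Type*} [NormedAddCommGroup E]
    (D : Set E) (lam : ℝ) (hlam : lam ∈ Set.Ioc 0 (1 / 4))
    (a b : ℝ) (γ : ℝ → E)
    (hγ : IsLambdaCurve D lam a b γ)
    (s t : ℝ) (hs : a ≤ s) (hst : s ≤ t) (htb : t ≤ b) :
    IsLambdaCurve D (2 * lam) s t γ := by
  refine ⟨hγ.1.mono hs hst htb, fun u v hu huv hv => ?_⟩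
  rcases (qhDist_nonneg (D := D) (γ s) (γ t)).eq_or_lt with hkst | hkst
  -- `c^{2λ}` degenerates to `1` here (division by zero), but the subarc has zero length.
  · calc qhVar D γ (Icc u v) ≤ qhVar D γ (Icc s t) := qhVar_mono γ (Icc_subset_Icc hu hv)
      _ ≤ ENNReal.ofReal (lamCoef D lam (γ a) (γ b) * qhDist D (γ s) (γ t)) := hγ.2 s t hs hst htb
      _ = 0 := by rw [← hkst, mul_zero, ofReal_zero]
      _ ≤ _ := zero_le
  · have hcoef : lamCoef D lam (γ a) (γ b) ≤ lamCoef D (2 * lam) (γ s) (γ t) :=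
      lamCoef_le_lamCoef_two_mul hlam.1.le hkst (hγ.qhDist_le hlam.1.le hs hst htb)
    exact (hγ.2 u v (hs.trans hu) huv (hv.trans htb)).trans
      (ofReal_le_ofReal (mul_le_mul_of_nonneg_right hcoef (qhDist_nonneg _ _)))

theorem stmt8 {E : Type*} [NormedAddCommGroup E] [NormedSpace ℝ E] [CompleteSpace E]
    (D : Set E) (hD : IsProperDomain D) (lam : ℝ) (hlam : lam ∈ Set.Ioc 0 (1 / 4))
    (a b : ℝ) (γ : ℝ → E) (hne : γ a ≠ γ b)
    (hγ : IsLambdaCurve D lam a b γ)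
    (s t : ℝ) (hs : a ≤ s) (hst : s ≤ t) (htb : t ≤ b) (hne' : γ s ≠ γ t) :
    IsLambdaCurve D (2 * lam) s t γ :=
  stmt8_general D lam hlam a b γ hγ s t hs hst htb
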